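/- arXiv:2402.12471 — 4 statements merged into one kernel-verified Lean document; each statement's English description precedes it below -/
import Mathlib

section
/- Let V be an n-dimensional real vector space and let ρ ∈ ⋀V*_ℂ be a pure spinor of the usual generalized-complex form, ρ = exp(B + iω) ∧ θ₁ ∧ … ∧ θ_k, where B, ω ∈ ⋀²V* are real 2-forms and θ₁, …, θ_k are complex 1-forms. If the degree-n component [ρ⊤ ∧ ρ̄]_n of ρ⊤ ∧ ρ̄ is nonzero, then n is even. -/
set_option synthInstance.maxHeartbeats 1000000
set_option maxHeartbeats 1000000

open ExteriorAlgebra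

noncomputable section

variable (V : Type*) [AddCommGroup V] [Module ℝ V] [FiniteDimensional ℝ V]

/-- The complexified dual `V*_ℂ`: complex-valued real-linear forms on `V`. -/
abbrev CplxDual := V →ₗ[ℝ] ℂ

/-- A real covector viewed as a complex one. -/
def cplxOfReal (θ : Module.Dual ℝ V) : CplxDual V := (Algebra.linearMap ℝ ℂ).comp θ

/-- Complex conjugation of a complex covector. -/
def conjCov (θ : CplxDual V) : CplxDual V := Complex.conjAe.toLinearMap.comp θ

/-- `exp(B) = Σ_k B^{∧k}/k!`; summing up to `dim V` is enough for 2-forms `B`,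
which are nilpotent. -/
def expWedgeC (B : ExteriorAlgebra ℂ (CplxDual V)) : ExteriorAlgebra ℂ (CplxDual V) :=
  ∑ k ∈ Finset.range (Module.finrank ℝ V + 1), (k.factorial : ℂ)⁻¹ • B ^ k

/-- The degree-`i` component of an element of `⋀ V*_ℂ`. -/
def degComp (i : ℕ) (x : ExteriorAlgebra ℂ (CplxDual V)) : ExteriorAlgebra ℂ (CplxDual V) :=
  (DirectSum.decompose (fun i : ℕ => ⋀[ℂ]^i (CplxDual V)) x i : ExteriorAlgebra ℂ (CplxDual V))

/-!
The argument is pure parity for the `ℤ/2`-grading of `⋀V*_ℂ`: `B ± iω` is even, hence so is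
its exponential, and `ρ`, `ρ̄` both have the parity of `k`. Reversal preserves parity, so
`ρ⊤ ∧ ρ̄` is even and its components in odd degrees vanish.
-/

namespace CliffordAlgebra

variable {R M : Type*} [CommRing R] [AddCommGroup M] [Module R M]

theorem list_prod_ofFn_ι_mem_evenOdd (Q : QuadraticForm R M) {k : ℕ} (v : Fin k → M) :
    (List.ofFn fun j => ι Q (v j)).prod ∈ evenOdd Q k := by
  simpa using SetLike.list_prod_ofFn_mem_graded (A := evenOdd Q) (fun _ => 1) _
    fun j => ι_mem_evenOdd_one Q (v j)

theorem reverse_mul_mem_evenOdd_zero {Q : QuadraticForm R M} {i : ZMod 2}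
    {x y : CliffordAlgebra Q} (hx : x ∈ evenOdd Q i) (hy : y ∈ evenOdd Q i) :
    reverse x * y ∈ evenOdd Q 0 := by
  have := SetLike.mul_mem_graded ((reverse_mem_evenOdd_iff Q).mpr hx) hy
  rwa [CharTwo.add_self_eq_zero] at this

theorem sum_ι_mul_ι_mem_evenOdd_zero (Q : QuadraticForm R M) {κ : Type*} (s : Finset κ)
    (a b : κ → M) : ∑ i ∈ s, ι Q (a i) * ι Q (b i) ∈ evenOdd Q 0 :=
  Submodule.sum_mem _ fun _ _ => ι_mul_ι_mem_evenOdd_zero Q _ _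

end CliffordAlgebra

namespace ExteriorAlgebra

variable {R M : Type*} [CommRing R] [AddCommGroup M] [Module R M]

theorem decompose_eq_zero_of_mem_evenOdd {i : ZMod 2} {x : ExteriorAlgebra R M}
    (hx : x ∈ CliffordAlgebra.evenOdd 0 i) {n : ℕ} (hn : (n : ZMod 2) ≠ i) :
    (DirectSum.decompose (fun j : ℕ => ⋀[R]^j M) x n : ExteriorAlgebra R M) = 0 := by
  let component : ExteriorAlgebra R M →ₗ[R] ExteriorAlgebra R M :=
    (⋀[R]^n M).subtype ∘ₗ DirectSum.component R ℕ (fun j => ⋀[R]^j M) n ∘ₗ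
      (DirectSum.decomposeLinearEquiv (fun j : ℕ => ⋀[R]^j M)).toLinearMap
  suffices CliffordAlgebra.evenOdd 0 i ≤ LinearMap.ker component from this hx
  refine iSup_le fun ⟨j, hj⟩ y hy => ?_
  have hjn : j ≠ n := by rintro rfl; exact hn hj
  exact DirectSum.decompose_of_mem_ne (fun j : ℕ => ⋀[R]^j M) (x := y) hy hjn

end ExteriorAlgebra

open CliffordAlgebra

omit [FiniteDimensional ℝ V] in
theorem expWedgeC_mem_evenOdd_zero {σ : ExteriorAlgebra ℂ (CplxDual V)}
    (hσ : σ ∈ evenOdd 0 0) : expWedgeC V σ ∈ evenOdd 0 0 :=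
  Submodule.sum_mem _ fun j _ => Submodule.smul_mem _ _ <| by
    simpa using SetLike.pow_mem_graded j hσ

omit [FiniteDimensional ℝ V] in
theorem expWedgeC_mul_prod_ι_mem_evenOdd {σ : ExteriorAlgebra ℂ (CplxDual V)}
    (hσ : σ ∈ evenOdd 0 0) {k : ℕ} (θ : Fin k → CplxDual V) :
    expWedgeC V σ * (List.ofFn fun j => ι ℂ (θ j)).prod ∈ evenOdd 0 k := by
  simpa using SetLike.mul_mem_graded (expWedgeC_mem_evenOdd_zero V hσ)
    (list_prod_ofFn_ι_mem_evenOdd 0 θ)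

omit [FiniteDimensional ℝ V] in
theorem degComp_eq_zero_of_mem_evenOdd_zero {n : ℕ} (hn : ¬ Even n)
    {x : ExteriorAlgebra ℂ (CplxDual V)} (hx : x ∈ evenOdd 0 0) : degComp V n x = 0 :=
  decompose_eq_zero_of_mem_evenOdd hx <| by
    rwa [Ne, ZMod.natCast_eq_zero_iff_even]

/-- let `V` be an `n`-dimensional real vector space and
`ρ = exp(B+iω) ∧ θ₁ ∧ … ∧ θ_k ∈ ⋀V*_ℂ` a pure spinor of the usual generalized-complex form,
where `B`, `ω` are real 2-forms (written as sums of decomposable real 2-forms) and the `θⱼ`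
are complex 1-forms.  If the degree-`n` component of `ρ⊤ ∧ ρ̄` is nonzero, then `n` is even.
Here `ρ̄ = exp(B-iω) ∧ θ̄₁ ∧ … ∧ θ̄_k` is the complex conjugate of `ρ` and `⊤` is the
reversal anti-automorphism. -/
theorem even_dim_of_pure_real_index_zero
    (k : ℕ) (θ : Fin k → CplxDual V)
    (NB Nω : ℕ) (aB bB : Fin NB → Module.Dual ℝ V) (aω bω : Fin Nω → Module.Dual ℝ V)
    (B ω : ExteriorAlgebra ℂ (CplxDual V))
    (hB : B = ∑ i, ExteriorAlgebra.ι ℂ (cplxOfReal V (aB i)) *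
      ExteriorAlgebra.ι ℂ (cplxOfReal V (bB i)))
    (hω : ω = ∑ i, ExteriorAlgebra.ι ℂ (cplxOfReal V (aω i)) *
      ExteriorAlgebra.ι ℂ (cplxOfReal V (bω i)))
    (ρ ρbar : ExteriorAlgebra ℂ (CplxDual V))
    (hρ : ρ = expWedgeC V (B + Complex.I • ω) *
      (List.ofFn fun j => ExteriorAlgebra.ι ℂ (θ j)).prod)
    (hρbar : ρbar = expWedgeC V (B - Complex.I • ω) *
      (List.ofFn fun j => ExteriorAlgebra.ι ℂ (conjCov V (θ j))).prod)
    (hne : degComp V (Module.finrank ℝ V) (CliffordAlgebra.reverse ρ * ρbar) ≠ 0) :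
    Even (Module.finrank ℝ V) := by
  have hB_even : B ∈ evenOdd 0 0 := hB ▸ sum_ι_mul_ι_mem_evenOdd_zero 0 _ _ _
  have hω_even : Complex.I • ω ∈ evenOdd 0 0 :=
    Submodule.smul_mem _ _ (hω ▸ sum_ι_mul_ι_mem_evenOdd_zero 0 _ _ _)
  have hρ_parity : ρ ∈ evenOdd 0 k :=
    hρ ▸ expWedgeC_mul_prod_ι_mem_evenOdd V (add_mem hB_even hω_even) θ
  have hρbar_parity : ρbar ∈ evenOdd 0 k :=
    hρbar ▸ expWedgeC_mul_prod_ι_mem_evenOdd V (sub_mem hB_even hω_even) _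
  by_contra hodd
  exact hne <| degComp_eq_zero_of_mem_evenOdd_zero V hodd <|
    reverse_mul_mem_evenOdd_zero hρ_parity hρbar_parity

end
end

section
/- Let V be a finite-dimensional real vector space. For any two 1-forms A, A' ∈ V* and every mixed-degree ψ ∈ ⋀V*, one has e^A(e^{A'}ψ) = e^{A+A'}(e^{-A∧A'}ψ); explicitly, (ψ + A'∧τψ) + A∧τ(ψ + A'∧τψ) = (ψ - (A∧A')∧ψ) + (A+A') ∧ τ(ψ - (A∧A')∧ψ). -/
open ExteriorAlgebra

private lemma aux_eA {R : Type*} [Ring R] (a b p i : R)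
    (ha : a * a = 0) (hb : b * b = 0) (hc : b * a = -(a * b)) :
    p + b * i + a * (i + -b * p) = p - a * b * p + (a + b) * (i - -a * -b * i) := by
  have h1 : ∀ x : R, a * (a * x) = 0 := fun x => by rw [← mul_assoc, ha, zero_mul]
  have h2 : b * (a * (b * i)) = 0 := by
    rw [← mul_assoc, hc, neg_mul, mul_assoc, ← mul_assoc b, hb, zero_mul, mul_zero, neg_zero]
  calc p + b * i + a * (i + -b * p)
      = p - a * b * p + (a * i + b * i) - (a * (a * (b * i)) + b * (a * (b * i))) := by
        rw [h2, h1 (b * i)]; noncomm_ring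
    _ = p - a * b * p + (a + b) * (i - -a * -b * i) := by noncomm_ring

set_option maxHeartbeats 1000000 in
/-- For 1-forms `A, A' ∈ V*` and any mixed-degree `ψ ∈ ⋀ V*`,
`e^A (e^{A'} ψ) = e^{A+A'} (e^{-A∧A'} ψ)`, explicitly
`(ψ + A'∧τψ) + A∧τ(ψ + A'∧τψ) = (ψ - (A∧A')∧ψ) + (A+A') ∧ τ(ψ - (A∧A')∧ψ)`. -/
theorem eA_eA'_composition
    (V : Type*) [AddCommGroup V] [Module ℝ V] [FiniteDimensional ℝ V]
    (A A' : Module.Dual ℝ V) (ψ : ExteriorAlgebra ℝ (Module.Dual ℝ V))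
    (eField : Module.Dual ℝ V → ExteriorAlgebra ℝ (Module.Dual ℝ V) →
      ExteriorAlgebra ℝ (Module.Dual ℝ V))
    (heField : ∀ (B : Module.Dual ℝ V) (ψ : ExteriorAlgebra ℝ (Module.Dual ℝ V)),
      eField B ψ = ψ + ExteriorAlgebra.ι ℝ B * CliffordAlgebra.involute ψ) :
    eField A (eField A' ψ)
      = eField (A + A') (ψ - (ExteriorAlgebra.ι ℝ A * ExteriorAlgebra.ι ℝ A') * ψ) := by
  have hc : ι ℝ A' * ι ℝ A = -(ι ℝ A * ι ℝ A') := by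
    have h := ι_sq_zero (R := ℝ) (A + A')
    rw [map_add, add_mul, mul_add, mul_add, ι_sq_zero, ι_sq_zero, zero_add, add_zero] at h
    exact eq_neg_of_add_eq_zero_right h
  simp only [heField, map_add, map_sub, map_mul, CliffordAlgebra.involute_ι,
    CliffordAlgebra.involute_involute]
  exact aux_eA (ι ℝ A) (ι ℝ A') ψ (CliffordAlgebra.involute ψ)
    (ι_sq_zero (R := ℝ) A) (ι_sq_zero (R := ℝ) A') hc
end

section
/- Let V be an n-dimensional real vector space. For every real 1-form A ∈ V*, every real 2-form B ∈ ⋀²V*, and all ρ, ψ ∈ ⋀V*_ℂ, the B_n spinor pairing is invariant under A-fields and B-fields: (e^A e^B ρ, e^A e^B ψ) = (ρ, ψ). -/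
set_option synthInstance.maxHeartbeats 1000000
set_option maxHeartbeats 1000000

open ExteriorAlgebra

noncomputable section

/-- Auxiliary purely ring-theoretic computation behind the invariance of the pairing. -/
lemma key_alg_aux {A : Type*} [Ring A] (a E E' P Q S T : A) (ha : a*a = 0) (hE : E'*E = 1) :
    (P*E' + (Q*E')*a) * (E*S - a*(E*T)) - ((Q*E') - (P*E')*a) * (E*T + a*(E*S))
      = P*S - Q*T := by
  have h1 : ∀ v : A, E' * (E * v) = v := fun v => by rw [← mul_assoc, hE, one_mul]
  have h2 : ∀ v : A, a * (a * v) = 0 := fun v => by rw [← mul_assoc, ha, zero_mul]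
  simp only [mul_add, add_mul, mul_sub, sub_mul, mul_assoc, h1, h2, mul_zero, zero_mul]
  abel

lemma coeff_fact_aux (m i : ℕ) (him : i ≤ m) :
    ((-1)^i * ((i.factorial:ℂ))⁻¹) * (((m-i).factorial:ℂ))⁻¹
      = (-1)^i * (m.choose i : ℂ) * ((m.factorial:ℂ))⁻¹ := by
  have h := Nat.choose_mul_factorial_mul_factorial him
  have h' : ((m.choose i : ℂ)) * (i.factorial : ℂ) * ((m-i).factorial : ℂ)
      = (m.factorial : ℂ) := by
    exact_mod_cast congrArg (Nat.cast : ℕ → ℂ) h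
  have hi : (i.factorial : ℂ) ≠ 0 := Nat.cast_ne_zero.mpr i.factorial_ne_zero
  have hmi : ((m-i).factorial : ℂ) ≠ 0 := Nat.cast_ne_zero.mpr (m-i).factorial_ne_zero
  have hm : (m.factorial : ℂ) ≠ 0 := Nat.cast_ne_zero.mpr m.factorial_ne_zero
  have key : ((i.factorial:ℂ))⁻¹ * (((m-i).factorial:ℂ))⁻¹
      = (m.choose i : ℂ) * ((m.factorial:ℂ))⁻¹ := by
    field_simp
    linear_combination -h'
  rw [mul_assoc, key, mul_assoc]

lemma alt_sum_aux (m : ℕ) (hm : 0 < m) :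
    ∑ i ∈ Finset.range (m+1), ((-1:ℂ))^i * (m.choose i : ℂ) = 0 := by
  have := Int.alternating_sum_range_choose (n := m)
  rw [if_neg hm.ne'] at this
  exact_mod_cast congrArg (Int.cast : ℤ → ℂ) this

variable (V : Type*) [AddCommGroup V] [Module ℝ V] [FiniteDimensional ℝ V]

/-- The even part `ψ₊` of a mixed-degree element. -/
def evenPart (x : ExteriorAlgebra ℂ (CplxDual V)) : ExteriorAlgebra ℂ (CplxDual V) :=
  (2⁻¹ : ℂ) • (x + CliffordAlgebra.involute x)

/-- The odd part `ψ₋` of a mixed-degree element. -/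
def oddPart (x : ExteriorAlgebra ℂ (CplxDual V)) : ExteriorAlgebra ℂ (CplxDual V) :=
  (2⁻¹ : ℂ) • (x - CliffordAlgebra.involute x)

/-- The `B_n` spinor pairing `(ρ,ψ) = [ρ⊤₋ ∧ ψ₊ − ρ⊤₊ ∧ ψ₋]_n`, `n = dim V`. -/
def spinorPairing (ρ ψ : ExteriorAlgebra ℂ (CplxDual V)) : ExteriorAlgebra ℂ (CplxDual V) :=
  degComp V (Module.finrank ℝ V)
    (CliffordAlgebra.reverse (oddPart V ρ) * evenPart V ψ -
      CliffordAlgebra.reverse (evenPart V ρ) * oddPart V ψ)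

lemma finrank_cplxDual : Module.finrank ℂ (CplxDual V) = Module.finrank ℝ V := by
  let b := Module.finBasis ℝ V
  let e : (Fin (Module.finrank ℝ V) → ℂ) ≃ₗ[ℂ] CplxDual V := b.constr ℂ
  rw [← e.finrank_eq, Module.finrank_fin_fun]

instance : FiniteDimensional ℂ (CplxDual V) := by
  let b := Module.finBasis ℝ V
  let e : (Fin (Module.finrank ℝ V) → ℂ) ≃ₗ[ℂ] CplxDual V := b.constr ℂ
  exact Module.Finite.equiv e

lemma iMulti_zero_aux {k : ℕ} (hk : Module.finrank ℝ V < k) (v : Fin k → CplxDual V) :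
    ιMulti ℂ k v = 0 := by
  refine AlternatingMap.map_linearDependent _ v fun h => ?_
  have := h.fintype_card_le_finrank
  rw [Fintype.card_fin, finrank_cplxDual] at this
  omega

lemma extPow_bot_aux {k : ℕ} (hk : Module.finrank ℝ V < k) :
    (⋀[ℂ]^k (CplxDual V) : Submodule ℂ (ExteriorAlgebra ℂ (CplxDual V))) = ⊥ := by
  rw [← ιMulti_span_fixedDegree, Submodule.span_eq_bot]
  rintro x ⟨v, rfl⟩
  exact iMulti_zero_aux V hk v

lemma pow_zero_of_sq_aux {x : ExteriorAlgebra ℂ (CplxDual V)}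
    (hx : x ∈ (⋀[ℂ]^2 (CplxDual V) : Submodule ℂ (ExteriorAlgebra ℂ (CplxDual V))))
    {m : ℕ} (hm : Module.finrank ℝ V < m) : x ^ m = 0 := by
  have h1 : x ^ m ∈ (⋀[ℂ]^2 (CplxDual V) : Submodule ℂ _) ^ m := Submodule.pow_mem_pow _ hx m
  have h2 : ((⋀[ℂ]^2 (CplxDual V) : Submodule ℂ _) ^ m : Submodule ℂ _)
      = ⋀[ℂ]^(2*m) (CplxDual V) := by
    rw [show (⋀[ℂ]^(2*m) (CplxDual V) : Submodule ℂ _)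
      = LinearMap.range (ι ℂ : CplxDual V →ₗ[ℂ] _) ^ (2*m) from rfl, pow_mul]
  rw [h2, extPow_bot_aux V (by omega), Submodule.mem_bot] at h1
  exact h1

open Polynomial in
lemma exp_neg_mul_exp_aux (x : ExteriorAlgebra ℂ (CplxDual V))
    (hx : ∀ m, Module.finrank ℝ V < m → x ^ m = 0) :
    expWedgeC V (-x) * expWedgeC V x = 1 := by
  set n := Module.finrank ℝ V with hn
  set p : Polynomial ℂ := ∑ k ∈ Finset.range (n+1), C ((k.factorial:ℂ)⁻¹) * X ^ k with hpdef
  set q : Polynomial ℂ :=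
    ∑ k ∈ Finset.range (n+1), C ((-1)^k * (k.factorial:ℂ)⁻¹) * X ^ k with hqdef
  have hp : aeval x p = expWedgeC V x := by
    rw [hpdef, map_sum]
    refine Finset.sum_congr rfl fun k _ => ?_
    rw [map_mul, aeval_C, map_pow, aeval_X, Algebra.smul_def]
  have hq : aeval x q = expWedgeC V (-x) := by
    rw [hqdef, map_sum]
    refine Finset.sum_congr rfl fun k _ => ?_
    rw [map_mul, aeval_C, map_pow, aeval_X, ← neg_one_smul ℂ x, _root_.smul_pow, smul_smul,
      Algebra.smul_def, mul_comm ((-1:ℂ)^k) ((k.factorial:ℂ))⁻¹]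
  have hpc : ∀ j, p.coeff j = if j ∈ Finset.range (n+1) then ((j.factorial:ℂ))⁻¹ else 0 := by
    intro j
    rw [hpdef, finset_sum_coeff]
    simp only [coeff_C_mul, coeff_X_pow, mul_ite, mul_one, mul_zero]
    rw [Finset.sum_ite_eq (Finset.range (n+1)) j fun k => ((k.factorial:ℂ))⁻¹]
  have hqc : ∀ j, q.coeff j
      = if j ∈ Finset.range (n+1) then (-1)^j * ((j.factorial:ℂ))⁻¹ else 0 := by
    intro j
    rw [hqdef, finset_sum_coeff]
    simp only [coeff_C_mul, coeff_X_pow, mul_ite, mul_one, mul_zero]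
    rw [Finset.sum_ite_eq (Finset.range (n+1)) j fun k => (-1)^k * ((k.factorial:ℂ))⁻¹]
  have key : ∀ m, 0 < m → m ≤ n → (q*p).coeff m = 0 := by
    intro m hm0 hmn
    rw [coeff_mul, Finset.Nat.sum_antidiagonal_eq_sum_range_succ_mk]
    have : ∀ i ∈ Finset.range (m+1),
        q.coeff i * p.coeff (m - i) = ((-1:ℂ))^i * (m.choose i : ℂ) * ((m.factorial:ℂ))⁻¹ := by
      intro i hi
      rw [Finset.mem_range] at hi
      have him : i ≤ m := by omega
      rw [hpc, hqc, if_pos, if_pos, coeff_fact_aux m i him]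
      · rw [Finset.mem_range]; omega
      · rw [Finset.mem_range]; omega
    rw [Finset.sum_congr rfl this, ← Finset.sum_mul, alt_sum_aux m hm0, zero_mul]
  have hc0 : (q*p).coeff 0 = 1 := by
    rw [mul_coeff_zero, hpc, hqc, if_pos, if_pos] <;>
      simp [Nat.factorial]
  rw [← hp, ← hq, ← map_mul]
  rw [(q*p).aeval_eq_sum_range]
  rw [Finset.sum_eq_single_of_mem 0 (Finset.mem_range.mpr (Nat.succ_pos _))]
  · rw [hc0, pow_zero, one_smul]
  · intro m _ hm0
    by_cases hmn : m ≤ n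
    · rw [key m (Nat.pos_of_ne_zero hm0) hmn, zero_smul]
    · rw [hx m (by omega), smul_zero]

open CliffordAlgebra in
lemma reverse_pow_aux (x : ExteriorAlgebra ℂ (CplxDual V)) (k : ℕ) :
    reverse (Q := (0 : QuadraticForm ℂ (CplxDual V))) (x ^ k)
      = (reverse (Q := (0 : QuadraticForm ℂ (CplxDual V))) x) ^ k := by
  induction k with
  | zero => simp [reverse.map_one]
  | succ k ih => rw [pow_succ, reverse.map_mul, ih, pow_succ']

open CliffordAlgebra in
lemma evenPart_mul_aux (E x : ExteriorAlgebra ℂ (CplxDual V)) (hE : involute E = E) :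
    evenPart V (E * x) = E * evenPart V x := by
  unfold evenPart
  rw [map_mul, hE, ← mul_add, mul_smul_comm]

open CliffordAlgebra in
lemma oddPart_mul_aux (E x : ExteriorAlgebra ℂ (CplxDual V)) (hE : involute E = E) :
    oddPart V (E * x) = E * oddPart V x := by
  unfold oddPart
  rw [map_mul, hE, ← mul_sub, mul_smul_comm]

open CliffordAlgebra in
lemma evenPart_A_aux (a x : ExteriorAlgebra ℂ (CplxDual V)) (hai : involute a = -a) :
    evenPart V (x + a * involute x) = evenPart V x - a * oddPart V x := by
  unfold evenPart oddPart
  rw [map_add, map_mul, hai, involute_involute, mul_smul_comm, ← smul_sub]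
  congr 1
  noncomm_ring

open CliffordAlgebra in
lemma oddPart_A_aux (a x : ExteriorAlgebra ℂ (CplxDual V)) (hai : involute a = -a) :
    oddPart V (x + a * involute x) = oddPart V x + a * evenPart V x := by
  unfold evenPart oddPart
  rw [map_add, map_mul, hai, involute_involute, mul_smul_comm, ← smul_add]
  congr 1
  noncomm_ring

/-- the `B_n` spinor pairing is invariant under A-fields and B-fields:
for every real 1-form `A`, every real 2-form `B` (a sum of decomposable real 2-forms) and
all `ρ, ψ ∈ ⋀V*_ℂ`, `(e^A e^B ρ, e^A e^B ψ) = (ρ, ψ)`. -/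
theorem spinorPairing_invariant
    (A₀ : Module.Dual ℝ V)
    (NB : ℕ) (aB bB : Fin NB → Module.Dual ℝ V)
    (B : ExteriorAlgebra ℂ (CplxDual V))
    (hB : B = ∑ i, ExteriorAlgebra.ι ℂ (cplxOfReal V (aB i)) *
      ExteriorAlgebra.ι ℂ (cplxOfReal V (bB i)))
    (eA eB : ExteriorAlgebra ℂ (CplxDual V) → ExteriorAlgebra ℂ (CplxDual V))
    (heA : ∀ x, eA x = x + ExteriorAlgebra.ι ℂ (cplxOfReal V A₀) * CliffordAlgebra.involute x)
    (heB : ∀ x, eB x = expWedgeC V B * x)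
    (ρ ψ : ExteriorAlgebra ℂ (CplxDual V)) :
    spinorPairing V (eA (eB ρ)) (eA (eB ψ)) = spinorPairing V ρ ψ := by
  set a : ExteriorAlgebra ℂ (CplxDual V) := ExteriorAlgebra.ι ℂ (cplxOfReal V A₀) with ha_def
  have ha2 : a * a = 0 := ι_sq_zero _
  have hai : CliffordAlgebra.involute a = -a := CliffordAlgebra.involute_ι _
  -- nilpotency of B
  have hmem : B ∈ (⋀[ℂ]^2 (CplxDual V) : Submodule ℂ (ExteriorAlgebra ℂ (CplxDual V))) := by
    rw [hB]
    refine Submodule.sum_mem _ fun i _ => ?_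
    rw [show (⋀[ℂ]^2 (CplxDual V) : Submodule ℂ (ExteriorAlgebra ℂ (CplxDual V)))
      = LinearMap.range (ι ℂ : CplxDual V →ₗ[ℂ] _)
        * LinearMap.range (ι ℂ : CplxDual V →ₗ[ℂ] _) from pow_two _]
    exact Submodule.mul_mem_mul (LinearMap.mem_range_self _ _) (LinearMap.mem_range_self _ _)
  have hBpow : ∀ m, Module.finrank ℝ V < m → B ^ m = 0 := fun m hm =>
    pow_zero_of_sq_aux V hmem hm
  set E : ExteriorAlgebra ℂ (CplxDual V) := expWedgeC V B with hE_def
  set E' : ExteriorAlgebra ℂ (CplxDual V) := expWedgeC V (-B) with hE'_def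
  have hEE : E' * E = 1 := exp_neg_mul_exp_aux V B hBpow
  -- conjugation facts for B and E
  have hinvB : CliffordAlgebra.involute B = B := by
    rw [hB, map_sum]
    refine Finset.sum_congr rfl fun i _ => ?_
    rw [map_mul, CliffordAlgebra.involute_ι, CliffordAlgebra.involute_ι, neg_mul_neg]
  have hrevB : CliffordAlgebra.reverse B = -B := by
    rw [hB, map_sum, ← Finset.sum_neg_distrib]
    refine Finset.sum_congr rfl fun i _ => ?_
    rw [CliffordAlgebra.reverse.map_mul, CliffordAlgebra.reverse_ι, CliffordAlgebra.reverse_ι]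
    exact eq_neg_of_add_eq_zero_right (ι_add_mul_swap _ _)
  have hinvE : CliffordAlgebra.involute E = E := by
    rw [hE_def]
    unfold expWedgeC
    rw [map_sum]
    refine Finset.sum_congr rfl fun k _ => ?_
    rw [map_smul, map_pow, hinvB]
  have hrevE : CliffordAlgebra.reverse E = E' := by
    rw [hE_def, hE'_def]
    unfold expWedgeC
    rw [map_sum]
    refine Finset.sum_congr rfl fun k _ => ?_
    rw [map_smul, reverse_pow_aux, hrevB]
  -- even and odd parts of the transformed spinors
  have he : ∀ x, evenPart V (eA (eB x)) = E * evenPart V x - a * (E * oddPart V x) := by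
    intro x
    rw [heA, heB, evenPart_A_aux V a _ hai, evenPart_mul_aux V E x hinvE,
      oddPart_mul_aux V E x hinvE]
  have ho : ∀ x, oddPart V (eA (eB x)) = E * oddPart V x + a * (E * evenPart V x) := by
    intro x
    rw [heA, heB, oddPart_A_aux V a _ hai, evenPart_mul_aux V E x hinvE,
      oddPart_mul_aux V E x hinvE]
  have har : CliffordAlgebra.reverse a = a := CliffordAlgebra.reverse_ι _
  have hro : CliffordAlgebra.reverse (oddPart V (eA (eB ρ)))
      = CliffordAlgebra.reverse (oddPart V ρ) * E'
        + (CliffordAlgebra.reverse (evenPart V ρ) * E') * a := by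
    rw [ho ρ, map_add, CliffordAlgebra.reverse.map_mul, CliffordAlgebra.reverse.map_mul,
      CliffordAlgebra.reverse.map_mul, hrevE, har]
  have hre : CliffordAlgebra.reverse (evenPart V (eA (eB ρ)))
      = CliffordAlgebra.reverse (evenPart V ρ) * E'
        - (CliffordAlgebra.reverse (oddPart V ρ) * E') * a := by
    rw [he ρ, map_sub, CliffordAlgebra.reverse.map_mul, CliffordAlgebra.reverse.map_mul,
      CliffordAlgebra.reverse.map_mul, hrevE, har]
  unfold spinorPairing
  congr 1
  rw [hro, hre, he ψ, ho ψ]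
  exact key_alg_aux a E E' (CliffordAlgebra.reverse (oddPart V ρ))
    (CliffordAlgebra.reverse (evenPart V ρ)) (evenPart V ψ) (oddPart V ψ) ha2 hEE

end
end

section
/- Let U ⊆ ℝ³ be open and let ρ = ρ₀ + ρ₁ + ρ₂ + ρ₃ be a smooth complex mixed-degree differential form on U (ρ_k of degree k) such that ρ₀ is nowhere vanishing and ρ is pointwise pure of type 0, i.e. there exist a smooth complex 1-form λ and a smooth complex 2-form μ on U with ρ₁ = ρ₀ λ, ρ₂ = ρ₀ μ, ρ₃ = ρ₀ λ ∧ μ. If ρ is integrable, i.e. dρ = (X+f+α)·ρ for some smooth complex vector field X, function f and 1-form α on U, then the normalized form 1 + ρ₁/ρ₀ + ρ₂/ρ₀ + ρ₃/ρ₀ is closed: d(ρ₁/ρ₀) = 0, d(ρ₂/ρ₀) = 0 and d(ρ₃/ρ₀) = 0. -/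
noncomputable section

/-- A mixed-degree complex differential form on (an open subset of) `ℝⁿ`, described by its
coefficient functions with respect to the basis `dx_S = dx_{i₁} ∧ … ∧ dx_{i_k}`
(for `S = {i₁ < … < i_k} ⊆ {0,…,n-1}`). -/
abbrev MForm (n : ℕ) := (Fin n → ℝ) → Finset (Fin n) → ℂ

namespace MForm

variable {n : ℕ}

/-- The sign `ε(S,T)` with which `dx_S ∧ dx_T = ε(S,T) dx_{S ∪ T}` for disjoint `S`, `T`. -/
def mergeSign (S T : Finset (Fin n)) : ℂ :=
  (-1 : ℂ) ^ ((S ×ˢ T).filter fun p => p.2 < p.1).card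

/-- The wedge product of mixed-degree forms. -/
def wedge (α β : MForm n) : MForm n := fun x S =>
  ∑ T ∈ S.powerset, mergeSign T (S \ T) * α x T * β x (S \ T)

/-- The parity involution `τρ := ρ₊ − ρ₋`. -/
def tau (ρ : MForm n) : MForm n := fun x S => (-1 : ℂ) ^ S.card * ρ x S

/-- The even part `ρ₊` of a mixed-degree form. -/
def evenPart (ρ : MForm n) : MForm n := fun x S => if Even S.card then ρ x S else 0

/-- The odd part `ρ₋` of a mixed-degree form. -/
def oddPart (ρ : MForm n) : MForm n := fun x S => if Even S.card then 0 else ρ x S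

/-- The reversal anti-automorphism, `(α₁∧…∧α_r)⊤ = α_r∧…∧α₁`; on degree `k` it is
multiplication by `(-1)^(k(k-1)/2)`. -/
def rev (ρ : MForm n) : MForm n := fun x S => (-1 : ℂ) ^ (S.card * (S.card - 1) / 2) * ρ x S

/-- Complex conjugation of a form. -/
def conjF (ρ : MForm n) : MForm n := fun x S => (starRingEnd ℂ) (ρ x S)

/-- The exterior derivative: `(dρ)_S = Σ_{i∈S} (-1)^{#{j∈S : j<i}} ∂_i ρ_{S∖{i}}`, the
coordinate expression of `d`. -/
def extDer (ρ : MForm n) : MForm n := fun x S =>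
  ∑ i ∈ S, (-1 : ℂ) ^ (S.filter fun j => j < i).card *
    fderiv ℝ (fun y => ρ y (S.erase i)) x (Pi.single i 1)

/-- Contraction `ι_X ρ` with a (possibly complex) vector field `X`. -/
def contr (X : (Fin n → ℝ) → Fin n → ℂ) (ρ : MForm n) : MForm n := fun x S =>
  ∑ i ∈ Sᶜ, (-1 : ℂ) ^ (S.filter fun j => j < i).card * X x i * ρ x (insert i S)

/-- The Clifford action of `v = X + f + α` on spinors: `v·ρ := ι_X ρ + f τρ + α ∧ ρ`. -/
def cliffAct (X : (Fin n → ℝ) → Fin n → ℂ) (f : (Fin n → ℝ) → ℂ) (α : MForm n)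
    (ρ : MForm n) : MForm n :=
  fun x S => contr X ρ x S + f x * tau ρ x S + wedge α ρ x S

/-- A form is smooth on `U` when all of its coefficient functions are. -/
def SmoothOn (U : Set (Fin n → ℝ)) (ρ : MForm n) : Prop :=
  ∀ S, ContDiffOn ℝ (⊤ : ℕ∞) (fun x => ρ x S) U

/-- A form is homogeneous of degree `k` when only degree-`k` coefficients are nonzero. -/
def IsHomog (k : ℕ) (ρ : MForm n) : Prop := ∀ x S, S.card ≠ k → ρ x S = 0

/-- A form is real when all of its coefficients are real. -/
def IsReal (ρ : MForm n) : Prop := ∀ x S, (ρ x S).im = 0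

/-- Wedge powers `B^{∧k}`. -/
def wpow (B : MForm n) : ℕ → MForm n
  | 0 => fun _ S => if S = ∅ then 1 else 0
  | k + 1 => wedge B (wpow B k)

/-- `exp(B) = Σ_k B^{∧k}/k!`, a finite sum since `B^{∧k} = 0` for `k > n`. -/
def expW (B : MForm n) : MForm n :=
  ∑ k ∈ Finset.range (n + 1), ((k.factorial : ℂ))⁻¹ • wpow B k

/-- The A-field action `e^A ρ := ρ + A ∧ τρ` of a 1-form `A`. -/
def eA (A ρ : MForm n) : MForm n := ρ + wedge A (tau ρ)

/-- The B-field action `e^B ρ := exp(B) ∧ ρ` of a 2-form `B`. -/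
def eB (B ρ : MForm n) : MForm n := wedge (expW B) ρ

end MForm

open MForm

lemma fact0 : ((∅ : Finset (Fin 3))).card = 0 := by decide
lemma fact1 : ((∅ : Finset (Fin 3)))ᶜ = ({0,1,2} : Finset (Fin 3)) := by decide
lemma fact2 : ((∅ : Finset (Fin 3))).powerset = ({∅} : Finset (Finset (Fin 3))) := by decide
lemma fact3 : insert (0 : Fin 3) ((∅ : Finset (Fin 3))) = ({0} : Finset (Fin 3)) := by decide
lemma fact4 : (((∅ : Finset (Fin 3))).filter fun j => j < (0 : Fin 3)).card = 0 := by decide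
lemma fact5 : insert (1 : Fin 3) ((∅ : Finset (Fin 3))) = ({1} : Finset (Fin 3)) := by decide
lemma fact6 : (((∅ : Finset (Fin 3))).filter fun j => j < (1 : Fin 3)).card = 0 := by decide
lemma fact7 : insert (2 : Fin 3) ((∅ : Finset (Fin 3))) = ({2} : Finset (Fin 3)) := by decide
lemma fact8 : (((∅ : Finset (Fin 3))).filter fun j => j < (2 : Fin 3)).card = 0 := by decide
lemma fact9 : ((∅ : Finset (Fin 3))) \ ((∅ : Finset (Fin 3))) = (∅ : Finset (Fin 3)) := by decide
lemma fact10 : MForm.mergeSign ((∅ : Finset (Fin 3))) ((∅ : Finset (Fin 3))) = 1 := by unfold MForm.mergeSign; rw [show ((((∅ : Finset (Fin 3))) ×ˢ ((∅ : Finset (Fin 3)))).filter fun p => p.2 < p.1).card = 0 from by decide]; norm_num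
lemma fact11 : (({0} : Finset (Fin 3))).card = 1 := by decide
lemma fact12 : (({0} : Finset (Fin 3)))ᶜ = ({1,2} : Finset (Fin 3)) := by decide
lemma fact13 : (({0} : Finset (Fin 3))).powerset = ({∅, {0}} : Finset (Finset (Fin 3))) := by decide
lemma fact14 : (({0} : Finset (Fin 3))).erase 0 = (∅ : Finset (Fin 3)) := by decide
lemma fact15 : ((({0} : Finset (Fin 3))).filter fun j => j < (0 : Fin 3)).card = 0 := by decide
lemma fact16 : insert (1 : Fin 3) (({0} : Finset (Fin 3))) = ({0,1} : Finset (Fin 3)) := by decide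
lemma fact17 : ((({0} : Finset (Fin 3))).filter fun j => j < (1 : Fin 3)).card = 1 := by decide
lemma fact18 : insert (2 : Fin 3) (({0} : Finset (Fin 3))) = ({0,2} : Finset (Fin 3)) := by decide
lemma fact19 : ((({0} : Finset (Fin 3))).filter fun j => j < (2 : Fin 3)).card = 1 := by decide
lemma fact20 : (({0} : Finset (Fin 3))) \ ((∅ : Finset (Fin 3))) = ({0} : Finset (Fin 3)) := by decide
lemma fact21 : MForm.mergeSign ((∅ : Finset (Fin 3))) (({0} : Finset (Fin 3))) = 1 := by unfold MForm.mergeSign; rw [show ((((∅ : Finset (Fin 3))) ×ˢ (({0} : Finset (Fin 3)))).filter fun p => p.2 < p.1).card = 0 from by decide]; norm_num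
lemma fact22 : (({0} : Finset (Fin 3))) \ (({0} : Finset (Fin 3))) = (∅ : Finset (Fin 3)) := by decide
lemma fact23 : MForm.mergeSign (({0} : Finset (Fin 3))) ((∅ : Finset (Fin 3))) = 1 := by unfold MForm.mergeSign; rw [show (((({0} : Finset (Fin 3))) ×ˢ ((∅ : Finset (Fin 3)))).filter fun p => p.2 < p.1).card = 0 from by decide]; norm_num
lemma fact24 : (({1} : Finset (Fin 3))).card = 1 := by decide
lemma fact25 : (({1} : Finset (Fin 3)))ᶜ = ({0,2} : Finset (Fin 3)) := by decide
lemma fact26 : (({1} : Finset (Fin 3))).powerset = ({∅, {1}} : Finset (Finset (Fin 3))) := by decide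
lemma fact27 : insert (0 : Fin 3) (({1} : Finset (Fin 3))) = ({0,1} : Finset (Fin 3)) := by decide
lemma fact28 : ((({1} : Finset (Fin 3))).filter fun j => j < (0 : Fin 3)).card = 0 := by decide
lemma fact29 : (({1} : Finset (Fin 3))).erase 1 = (∅ : Finset (Fin 3)) := by decide
lemma fact30 : ((({1} : Finset (Fin 3))).filter fun j => j < (1 : Fin 3)).card = 0 := by decide
lemma fact31 : insert (2 : Fin 3) (({1} : Finset (Fin 3))) = ({1,2} : Finset (Fin 3)) := by decide
lemma fact32 : ((({1} : Finset (Fin 3))).filter fun j => j < (2 : Fin 3)).card = 1 := by decide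
lemma fact33 : (({1} : Finset (Fin 3))) \ ((∅ : Finset (Fin 3))) = ({1} : Finset (Fin 3)) := by decide
lemma fact34 : MForm.mergeSign ((∅ : Finset (Fin 3))) (({1} : Finset (Fin 3))) = 1 := by unfold MForm.mergeSign; rw [show ((((∅ : Finset (Fin 3))) ×ˢ (({1} : Finset (Fin 3)))).filter fun p => p.2 < p.1).card = 0 from by decide]; norm_num
lemma fact35 : (({1} : Finset (Fin 3))) \ (({1} : Finset (Fin 3))) = (∅ : Finset (Fin 3)) := by decide
lemma fact36 : MForm.mergeSign (({1} : Finset (Fin 3))) ((∅ : Finset (Fin 3))) = 1 := by unfold MForm.mergeSign; rw [show (((({1} : Finset (Fin 3))) ×ˢ ((∅ : Finset (Fin 3)))).filter fun p => p.2 < p.1).card = 0 from by decide]; norm_num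
lemma fact37 : (({2} : Finset (Fin 3))).card = 1 := by decide
lemma fact38 : (({2} : Finset (Fin 3)))ᶜ = ({0,1} : Finset (Fin 3)) := by decide
lemma fact39 : (({2} : Finset (Fin 3))).powerset = ({∅, {2}} : Finset (Finset (Fin 3))) := by decide
lemma fact40 : insert (0 : Fin 3) (({2} : Finset (Fin 3))) = ({0,2} : Finset (Fin 3)) := by decide
lemma fact41 : ((({2} : Finset (Fin 3))).filter fun j => j < (0 : Fin 3)).card = 0 := by decide
lemma fact42 : insert (1 : Fin 3) (({2} : Finset (Fin 3))) = ({1,2} : Finset (Fin 3)) := by decide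
lemma fact43 : ((({2} : Finset (Fin 3))).filter fun j => j < (1 : Fin 3)).card = 0 := by decide
lemma fact44 : (({2} : Finset (Fin 3))).erase 2 = (∅ : Finset (Fin 3)) := by decide
lemma fact45 : ((({2} : Finset (Fin 3))).filter fun j => j < (2 : Fin 3)).card = 0 := by decide
lemma fact46 : (({2} : Finset (Fin 3))) \ ((∅ : Finset (Fin 3))) = ({2} : Finset (Fin 3)) := by decide
lemma fact47 : MForm.mergeSign ((∅ : Finset (Fin 3))) (({2} : Finset (Fin 3))) = 1 := by unfold MForm.mergeSign; rw [show ((((∅ : Finset (Fin 3))) ×ˢ (({2} : Finset (Fin 3)))).filter fun p => p.2 < p.1).card = 0 from by decide]; norm_num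
lemma fact48 : (({2} : Finset (Fin 3))) \ (({2} : Finset (Fin 3))) = (∅ : Finset (Fin 3)) := by decide
lemma fact49 : MForm.mergeSign (({2} : Finset (Fin 3))) ((∅ : Finset (Fin 3))) = 1 := by unfold MForm.mergeSign; rw [show (((({2} : Finset (Fin 3))) ×ˢ ((∅ : Finset (Fin 3)))).filter fun p => p.2 < p.1).card = 0 from by decide]; norm_num
lemma fact50 : (({0,1} : Finset (Fin 3))).card = 2 := by decide
lemma fact51 : (({0,1} : Finset (Fin 3)))ᶜ = ({2} : Finset (Fin 3)) := by decide
lemma fact52 : (({0,1} : Finset (Fin 3))).powerset = ({∅, {0}, {0,1}, {1}} : Finset (Finset (Fin 3))) := by decide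
lemma fact53 : (({0,1} : Finset (Fin 3))).erase 0 = ({1} : Finset (Fin 3)) := by decide
lemma fact54 : ((({0,1} : Finset (Fin 3))).filter fun j => j < (0 : Fin 3)).card = 0 := by decide
lemma fact55 : (({0,1} : Finset (Fin 3))).erase 1 = ({0} : Finset (Fin 3)) := by decide
lemma fact56 : ((({0,1} : Finset (Fin 3))).filter fun j => j < (1 : Fin 3)).card = 1 := by decide
lemma fact57 : insert (2 : Fin 3) (({0,1} : Finset (Fin 3))) = ({0,1,2} : Finset (Fin 3)) := by decide
lemma fact58 : ((({0,1} : Finset (Fin 3))).filter fun j => j < (2 : Fin 3)).card = 2 := by decide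
lemma fact59 : (({0,1} : Finset (Fin 3))) \ ((∅ : Finset (Fin 3))) = ({0,1} : Finset (Fin 3)) := by decide
lemma fact60 : MForm.mergeSign ((∅ : Finset (Fin 3))) (({0,1} : Finset (Fin 3))) = 1 := by unfold MForm.mergeSign; rw [show ((((∅ : Finset (Fin 3))) ×ˢ (({0,1} : Finset (Fin 3)))).filter fun p => p.2 < p.1).card = 0 from by decide]; norm_num
lemma fact61 : (({0,1} : Finset (Fin 3))) \ (({0} : Finset (Fin 3))) = ({1} : Finset (Fin 3)) := by decide
lemma fact62 : MForm.mergeSign (({0} : Finset (Fin 3))) (({1} : Finset (Fin 3))) = 1 := by unfold MForm.mergeSign; rw [show (((({0} : Finset (Fin 3))) ×ˢ (({1} : Finset (Fin 3)))).filter fun p => p.2 < p.1).card = 0 from by decide]; norm_num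
lemma fact63 : (({0,1} : Finset (Fin 3))) \ (({1} : Finset (Fin 3))) = ({0} : Finset (Fin 3)) := by decide
lemma fact64 : MForm.mergeSign (({1} : Finset (Fin 3))) (({0} : Finset (Fin 3))) = (-1) := by unfold MForm.mergeSign; rw [show (((({1} : Finset (Fin 3))) ×ˢ (({0} : Finset (Fin 3)))).filter fun p => p.2 < p.1).card = 1 from by decide]; norm_num
lemma fact65 : (({0,1} : Finset (Fin 3))) \ (({0,1} : Finset (Fin 3))) = (∅ : Finset (Fin 3)) := by decide
lemma fact66 : MForm.mergeSign (({0,1} : Finset (Fin 3))) ((∅ : Finset (Fin 3))) = 1 := by unfold MForm.mergeSign; rw [show (((({0,1} : Finset (Fin 3))) ×ˢ ((∅ : Finset (Fin 3)))).filter fun p => p.2 < p.1).card = 0 from by decide]; norm_num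
lemma fact67 : (({0,2} : Finset (Fin 3))).card = 2 := by decide
lemma fact68 : (({0,2} : Finset (Fin 3)))ᶜ = ({1} : Finset (Fin 3)) := by decide
lemma fact69 : (({0,2} : Finset (Fin 3))).powerset = ({∅, {0}, {0,2}, {2}} : Finset (Finset (Fin 3))) := by decide
lemma fact70 : (({0,2} : Finset (Fin 3))).erase 0 = ({2} : Finset (Fin 3)) := by decide
lemma fact71 : ((({0,2} : Finset (Fin 3))).filter fun j => j < (0 : Fin 3)).card = 0 := by decide
lemma fact72 : insert (1 : Fin 3) (({0,2} : Finset (Fin 3))) = ({0,1,2} : Finset (Fin 3)) := by decide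
lemma fact73 : ((({0,2} : Finset (Fin 3))).filter fun j => j < (1 : Fin 3)).card = 1 := by decide
lemma fact74 : (({0,2} : Finset (Fin 3))).erase 2 = ({0} : Finset (Fin 3)) := by decide
lemma fact75 : ((({0,2} : Finset (Fin 3))).filter fun j => j < (2 : Fin 3)).card = 1 := by decide
lemma fact76 : (({0,2} : Finset (Fin 3))) \ ((∅ : Finset (Fin 3))) = ({0,2} : Finset (Fin 3)) := by decide
lemma fact77 : MForm.mergeSign ((∅ : Finset (Fin 3))) (({0,2} : Finset (Fin 3))) = 1 := by unfold MForm.mergeSign; rw [show ((((∅ : Finset (Fin 3))) ×ˢ (({0,2} : Finset (Fin 3)))).filter fun p => p.2 < p.1).card = 0 from by decide]; norm_num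
lemma fact78 : (({0,2} : Finset (Fin 3))) \ (({0} : Finset (Fin 3))) = ({2} : Finset (Fin 3)) := by decide
lemma fact79 : MForm.mergeSign (({0} : Finset (Fin 3))) (({2} : Finset (Fin 3))) = 1 := by unfold MForm.mergeSign; rw [show (((({0} : Finset (Fin 3))) ×ˢ (({2} : Finset (Fin 3)))).filter fun p => p.2 < p.1).card = 0 from by decide]; norm_num
lemma fact80 : (({0,2} : Finset (Fin 3))) \ (({2} : Finset (Fin 3))) = ({0} : Finset (Fin 3)) := by decide
lemma fact81 : MForm.mergeSign (({2} : Finset (Fin 3))) (({0} : Finset (Fin 3))) = (-1) := by unfold MForm.mergeSign; rw [show (((({2} : Finset (Fin 3))) ×ˢ (({0} : Finset (Fin 3)))).filter fun p => p.2 < p.1).card = 1 from by decide]; norm_num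
lemma fact82 : (({0,2} : Finset (Fin 3))) \ (({0,2} : Finset (Fin 3))) = (∅ : Finset (Fin 3)) := by decide
lemma fact83 : MForm.mergeSign (({0,2} : Finset (Fin 3))) ((∅ : Finset (Fin 3))) = 1 := by unfold MForm.mergeSign; rw [show (((({0,2} : Finset (Fin 3))) ×ˢ ((∅ : Finset (Fin 3)))).filter fun p => p.2 < p.1).card = 0 from by decide]; norm_num
lemma fact84 : (({1,2} : Finset (Fin 3))).card = 2 := by decide
lemma fact85 : (({1,2} : Finset (Fin 3)))ᶜ = ({0} : Finset (Fin 3)) := by decide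
lemma fact86 : (({1,2} : Finset (Fin 3))).powerset = ({∅, {1}, {1,2}, {2}} : Finset (Finset (Fin 3))) := by decide
lemma fact87 : insert (0 : Fin 3) (({1,2} : Finset (Fin 3))) = ({0,1,2} : Finset (Fin 3)) := by decide
lemma fact88 : ((({1,2} : Finset (Fin 3))).filter fun j => j < (0 : Fin 3)).card = 0 := by decide
lemma fact89 : (({1,2} : Finset (Fin 3))).erase 1 = ({2} : Finset (Fin 3)) := by decide
lemma fact90 : ((({1,2} : Finset (Fin 3))).filter fun j => j < (1 : Fin 3)).card = 0 := by decide
lemma fact91 : (({1,2} : Finset (Fin 3))).erase 2 = ({1} : Finset (Fin 3)) := by decide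
lemma fact92 : ((({1,2} : Finset (Fin 3))).filter fun j => j < (2 : Fin 3)).card = 1 := by decide
lemma fact93 : (({1,2} : Finset (Fin 3))) \ ((∅ : Finset (Fin 3))) = ({1,2} : Finset (Fin 3)) := by decide
lemma fact94 : MForm.mergeSign ((∅ : Finset (Fin 3))) (({1,2} : Finset (Fin 3))) = 1 := by unfold MForm.mergeSign; rw [show ((((∅ : Finset (Fin 3))) ×ˢ (({1,2} : Finset (Fin 3)))).filter fun p => p.2 < p.1).card = 0 from by decide]; norm_num
lemma fact95 : (({1,2} : Finset (Fin 3))) \ (({1} : Finset (Fin 3))) = ({2} : Finset (Fin 3)) := by decide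
lemma fact96 : MForm.mergeSign (({1} : Finset (Fin 3))) (({2} : Finset (Fin 3))) = 1 := by unfold MForm.mergeSign; rw [show (((({1} : Finset (Fin 3))) ×ˢ (({2} : Finset (Fin 3)))).filter fun p => p.2 < p.1).card = 0 from by decide]; norm_num
lemma fact97 : (({1,2} : Finset (Fin 3))) \ (({2} : Finset (Fin 3))) = ({1} : Finset (Fin 3)) := by decide
lemma fact98 : MForm.mergeSign (({2} : Finset (Fin 3))) (({1} : Finset (Fin 3))) = (-1) := by unfold MForm.mergeSign; rw [show (((({2} : Finset (Fin 3))) ×ˢ (({1} : Finset (Fin 3)))).filter fun p => p.2 < p.1).card = 1 from by decide]; norm_num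
lemma fact99 : (({1,2} : Finset (Fin 3))) \ (({1,2} : Finset (Fin 3))) = (∅ : Finset (Fin 3)) := by decide
lemma fact100 : MForm.mergeSign (({1,2} : Finset (Fin 3))) ((∅ : Finset (Fin 3))) = 1 := by unfold MForm.mergeSign; rw [show (((({1,2} : Finset (Fin 3))) ×ˢ ((∅ : Finset (Fin 3)))).filter fun p => p.2 < p.1).card = 0 from by decide]; norm_num
lemma fact101 : (({0,1,2} : Finset (Fin 3))).card = 3 := by decide
lemma fact102 : (({0,1,2} : Finset (Fin 3)))ᶜ = (∅ : Finset (Fin 3)) := by decide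
lemma fact103 : (({0,1,2} : Finset (Fin 3))).powerset = ({∅, {0}, {0,1}, {0,1,2}, {0,2}, {1}, {1,2}, {2}} : Finset (Finset (Fin 3))) := by decide
lemma fact104 : (({0,1,2} : Finset (Fin 3))).erase 0 = ({1,2} : Finset (Fin 3)) := by decide
lemma fact105 : ((({0,1,2} : Finset (Fin 3))).filter fun j => j < (0 : Fin 3)).card = 0 := by decide
lemma fact106 : (({0,1,2} : Finset (Fin 3))).erase 1 = ({0,2} : Finset (Fin 3)) := by decide
lemma fact107 : ((({0,1,2} : Finset (Fin 3))).filter fun j => j < (1 : Fin 3)).card = 1 := by decide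
lemma fact108 : (({0,1,2} : Finset (Fin 3))).erase 2 = ({0,1} : Finset (Fin 3)) := by decide
lemma fact109 : ((({0,1,2} : Finset (Fin 3))).filter fun j => j < (2 : Fin 3)).card = 2 := by decide
lemma fact110 : (({0,1,2} : Finset (Fin 3))) \ ((∅ : Finset (Fin 3))) = ({0,1,2} : Finset (Fin 3)) := by decide
lemma fact111 : MForm.mergeSign ((∅ : Finset (Fin 3))) (({0,1,2} : Finset (Fin 3))) = 1 := by unfold MForm.mergeSign; rw [show ((((∅ : Finset (Fin 3))) ×ˢ (({0,1,2} : Finset (Fin 3)))).filter fun p => p.2 < p.1).card = 0 from by decide]; norm_num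
lemma fact112 : (({0,1,2} : Finset (Fin 3))) \ (({0} : Finset (Fin 3))) = ({1,2} : Finset (Fin 3)) := by decide
lemma fact113 : MForm.mergeSign (({0} : Finset (Fin 3))) (({1,2} : Finset (Fin 3))) = 1 := by unfold MForm.mergeSign; rw [show (((({0} : Finset (Fin 3))) ×ˢ (({1,2} : Finset (Fin 3)))).filter fun p => p.2 < p.1).card = 0 from by decide]; norm_num
lemma fact114 : (({0,1,2} : Finset (Fin 3))) \ (({1} : Finset (Fin 3))) = ({0,2} : Finset (Fin 3)) := by decide
lemma fact115 : MForm.mergeSign (({1} : Finset (Fin 3))) (({0,2} : Finset (Fin 3))) = (-1) := by unfold MForm.mergeSign; rw [show (((({1} : Finset (Fin 3))) ×ˢ (({0,2} : Finset (Fin 3)))).filter fun p => p.2 < p.1).card = 1 from by decide]; norm_num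
lemma fact116 : (({0,1,2} : Finset (Fin 3))) \ (({2} : Finset (Fin 3))) = ({0,1} : Finset (Fin 3)) := by decide
lemma fact117 : MForm.mergeSign (({2} : Finset (Fin 3))) (({0,1} : Finset (Fin 3))) = 1 := by unfold MForm.mergeSign; rw [show (((({2} : Finset (Fin 3))) ×ˢ (({0,1} : Finset (Fin 3)))).filter fun p => p.2 < p.1).card = 2 from by decide]; norm_num
lemma fact118 : (({0,1,2} : Finset (Fin 3))) \ (({0,1} : Finset (Fin 3))) = ({2} : Finset (Fin 3)) := by decide
lemma fact119 : MForm.mergeSign (({0,1} : Finset (Fin 3))) (({2} : Finset (Fin 3))) = 1 := by unfold MForm.mergeSign; rw [show (((({0,1} : Finset (Fin 3))) ×ˢ (({2} : Finset (Fin 3)))).filter fun p => p.2 < p.1).card = 0 from by decide]; norm_num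
lemma fact120 : (({0,1,2} : Finset (Fin 3))) \ (({0,2} : Finset (Fin 3))) = ({1} : Finset (Fin 3)) := by decide
lemma fact121 : MForm.mergeSign (({0,2} : Finset (Fin 3))) (({1} : Finset (Fin 3))) = (-1) := by unfold MForm.mergeSign; rw [show (((({0,2} : Finset (Fin 3))) ×ˢ (({1} : Finset (Fin 3)))).filter fun p => p.2 < p.1).card = 1 from by decide]; norm_num
lemma fact122 : (({0,1,2} : Finset (Fin 3))) \ (({1,2} : Finset (Fin 3))) = ({0} : Finset (Fin 3)) := by decide
lemma fact123 : MForm.mergeSign (({1,2} : Finset (Fin 3))) (({0} : Finset (Fin 3))) = 1 := by unfold MForm.mergeSign; rw [show (((({1,2} : Finset (Fin 3))) ×ˢ (({0} : Finset (Fin 3)))).filter fun p => p.2 < p.1).card = 2 from by decide]; norm_num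
lemma fact124 : (({0,1,2} : Finset (Fin 3))) \ (({0,1,2} : Finset (Fin 3))) = (∅ : Finset (Fin 3)) := by decide
lemma fact125 : MForm.mergeSign (({0,1,2} : Finset (Fin 3))) ((∅ : Finset (Fin 3))) = 1 := by unfold MForm.mergeSign; rw [show (((({0,1,2} : Finset (Fin 3))) ×ˢ ((∅ : Finset (Fin 3)))).filter fun p => p.2 < p.1).card = 0 from by decide]; norm_num

open MForm

/-- let `ρ = ρ₀ + ρ₁ + ρ₂ + ρ₃` be a smooth mixed-degree complex form on an
open `U ⊆ ℝ³` with `ρ₀` nowhere vanishing, which is pointwise pure of type 0, i.e.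
`ρ₁ = ρ₀ λ`, `ρ₂ = ρ₀ μ`, `ρ₃ = ρ₀ λ∧μ` for a smooth complex 1-form `λ` and a smooth
complex 2-form `μ`.  If `ρ` is integrable, `dρ = (X+f+α)·ρ`, then the normalized form
`1 + ρ₁/ρ₀ + ρ₂/ρ₀ + ρ₃/ρ₀` is closed. -/
theorem normalized_form_closed (U : Set (Fin 3 → ℝ)) (hU : IsOpen U)
    (ρ lam mu : MForm 3)
    (hρ : MForm.SmoothOn U ρ) (hlam : MForm.SmoothOn U lam) (hmu : MForm.SmoothOn U mu)
    (hlam1 : MForm.IsHomog 1 lam) (hmu2 : MForm.IsHomog 2 mu)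
    (hρ0 : ∀ x ∈ U, ρ x ∅ ≠ 0)
    (hpure1 : ∀ x ∈ U, ∀ S : Finset (Fin 3), S.card = 1 → ρ x S = ρ x ∅ * lam x S)
    (hpure2 : ∀ x ∈ U, ∀ S : Finset (Fin 3), S.card = 2 → ρ x S = ρ x ∅ * mu x S)
    (hpure3 : ∀ x ∈ U, ∀ S : Finset (Fin 3), S.card = 3 →
      ρ x S = ρ x ∅ * wedge lam mu x S)
    (X : (Fin 3 → ℝ) → Fin 3 → ℂ) (f : (Fin 3 → ℝ) → ℂ) (α : MForm 3)
    (hX : ∀ i, ContDiffOn ℝ (⊤ : ℕ∞) (fun x => X x i) U)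
    (hf : ContDiffOn ℝ (⊤ : ℕ∞) f U)
    (hα : MForm.SmoothOn U α) (hα1 : MForm.IsHomog 1 α)
    (hint : ∀ x ∈ U, ∀ S, extDer ρ x S = cliffAct X f α ρ x S) :
    ∀ x ∈ U, ∀ S, extDer (fun y T => ρ y T / ρ y ∅) x S = 0 := by
  
  intro x hx S
  have hmem : U ∈ nhds x := hU.mem_nhds hx
  have hcong : ∀ g h : (Fin 3 → ℝ) → ℂ, (∀ y ∈ U, g y = h y) →
      fderiv ℝ g x = fderiv ℝ h x := fun g h hgh =>
    Filter.EventuallyEq.fderiv_eq (Filter.eventuallyEq_of_mem hmem hgh)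
  have hdρ : ∀ T, DifferentiableAt ℝ (fun y => ρ y T) x :=
    fun T => ((hρ T).differentiableOn (by simp)).differentiableAt hmem
  have hdlam : ∀ T, DifferentiableAt ℝ (fun y => lam y T) x :=
    fun T => ((hlam T).differentiableOn (by simp)).differentiableAt hmem
  have hdmu : ∀ T, DifferentiableAt ℝ (fun y => mu y T) x :=
    fun T => ((hmu T).differentiableOn (by simp)).differentiableAt hmem
  have hP1 : ∀ i j : Fin 3, (fderiv ℝ (fun y => ρ y {j}) x) (Pi.single i 1) =
      (fderiv ℝ (fun y => ρ y ∅) x) (Pi.single i 1) * lam x {j} +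
        ρ x ∅ * (fderiv ℝ (fun y => lam y {j}) x) (Pi.single i 1) := by
    intro i j
    have hc : fderiv ℝ (fun y => ρ y {j}) x = fderiv ℝ (fun y => ρ y ∅ * lam y {j}) x :=
      hcong _ _ fun y hy => hpure1 y hy {j} (Finset.card_singleton j)
    rw [hc, fderiv_fun_mul (hdρ ∅) (hdlam {j})]
    simp [smul_eq_mul]; ring
  have hP2 : ∀ (i : Fin 3) (T : Finset (Fin 3)), T.card = 2 →
      (fderiv ℝ (fun y => ρ y T) x) (Pi.single i 1) =
      (fderiv ℝ (fun y => ρ y ∅) x) (Pi.single i 1) * mu x T +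
        ρ x ∅ * (fderiv ℝ (fun y => mu y T) x) (Pi.single i 1) := by
    intro i T hT
    have hc : fderiv ℝ (fun y => ρ y T) x = fderiv ℝ (fun y => ρ y ∅ * mu y T) x :=
      hcong _ _ fun y hy => hpure2 y hy T hT
    rw [hc, fderiv_fun_mul (hdρ ∅) (hdmu T)]
    simp [smul_eq_mul]; ring
  have hv1_0 : ρ x {0} = ρ x ∅ * lam x {0} := hpure1 x hx {0} (by decide)
  have hv1_1 : ρ x {1} = ρ x ∅ * lam x {1} := hpure1 x hx {1} (by decide)
  have hv1_2 : ρ x {2} = ρ x ∅ * lam x {2} := hpure1 x hx {2} (by decide)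
  have hv2_01 : ρ x {0,1} = ρ x ∅ * mu x {0,1} := hpure2 x hx {0,1} (by decide)
  have hv2_02 : ρ x {0,2} = ρ x ∅ * mu x {0,2} := hpure2 x hx {0,2} (by decide)
  have hv2_12 : ρ x {1,2} = ρ x ∅ * mu x {1,2} := hpure2 x hx {1,2} (by decide)
  have hv3 : ρ x {0,1,2} = ρ x ∅ * (lam x {0} * mu x {1,2} - lam x {1} * mu x {0,2}
      + lam x {2} * mu x {0,1}) := by
    have h := hpure3 x hx {0,1,2} (by decide)
    simp only [wedge] at h
    simp (config := { decide := true }) [fact0, fact1, fact2, fact3, fact4, fact5, fact6, fact7, fact8, fact9, fact10, fact11, fact12, fact13, fact14, fact15, fact16, fact17, fact18, fact19, fact20, fact21, fact22, fact23, fact24, fact25, fact26, fact27, fact28, fact29, fact30, fact31, fact32, fact33, fact34, fact35, fact36, fact37, fact38, fact39, fact40, fact41, fact42, fact43, fact44, fact45, fact46, fact47, fact48, fact49, fact50, fact51, fact52, fact53, fact54, fact55, fact56, fact57, fact58, fact59, fact60, fact61, fact62, fact63, fact64, fact65, fact66, fact67, fact68, fact69, fact70, fact71, fact72, fact73, fact74,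 fact75, fact76, fact77, fact78, fact79, fact80, fact81, fact82, fact83, fact84, fact85, fact86, fact87, fact88, fact89, fact90, fact91, fact92, fact93, fact94, fact95, fact96, fact97, fact98, fact99, fact100, fact101, fact102, fact103, fact104, fact105, fact106, fact107, fact108, fact109, fact110, fact111, fact112, fact113, fact114, fact115, fact116, fact117, fact118, fact119, fact120, fact121, fact122, fact123, fact124, fact125, Finset.sum_insert, Finset.sum_singleton, Finset.sum_empty, Fin.sum_univ_three, Finset.mem_insert, Finset.mem_singleton, hlam1 x, hmu2 x, hα1 x, pow_succ, pow_zero] at h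
    linear_combination h
  have hE := hint x hx ∅
  have h0 := hint x hx {0}
  have h1 := hint x hx {1}
  have h2 := hint x hx {2}
  have h01 := hint x hx {0,1}
  have h02 := hint x hx {0,2}
  have h12 := hint x hx {1,2}
  have h012 := hint x hx {0,1,2}
  simp only [extDer, cliffAct, contr, tau, wedge] at hE h0 h1 h2 h01 h02 h12 h012
  simp (config := { decide := true }) [fact0, fact1, fact2, fact3, fact4, fact5, fact6, fact7, fact8, fact9, fact10, fact11, fact12, fact13, fact14, fact15, fact16, fact17, fact18, fact19, fact20, fact21, fact22, fact23, fact24, fact25, fact26, fact27, fact28, fact29, fact30, fact31, fact32, fact33, fact34, fact35, fact36, fact37, fact38, fact39, fact40, fact41, fact42, fact43, fact44, fact45, fact46, fact47, fact48, fact49, fact50, fact51, fact52, fact53, fact54, fact55, fact56, fact57, fact58, fact59, fact60, fact61, fact62, fact63, fact64, fact65, fact66, fact67, fact68, fact69, fact70, fact71, fact72, fact73, fact74, fact75, fact76, fact77, fact78, fact79, fact80, fact81, fact82, fact83, fact84, fact85, fact86, fact87, fact88, fact89, fact90, fact91, fact92, fact93, fact94, fact95, fact96, fact97, fact98, fact99,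 fact100, fact101, fact102, fact103, fact104, fact105, fact106, fact107, fact108, fact109, fact110, fact111, fact112, fact113, fact114, fact115, fact116, fact117, fact118, fact119, fact120, fact121, fact122, fact123, fact124, fact125, Finset.sum_insert, Finset.sum_singleton, Finset.sum_empty, Fin.sum_univ_three, Finset.mem_insert, Finset.mem_singleton, hlam1 x, hmu2 x, hα1 x, pow_succ, pow_zero] at hE h0 h1 h2 h01 h02 h12 h012
  simp only [hv1_0, hv1_1, hv1_2, hv2_01, hv2_02, hv2_12, hv3] at hE h0 h1 h2 h01 h02 h12 h012
  simp only [hP1 0 1, hP1 1 0, hP1 0 2, hP1 2 0, hP1 1 2, hP1 2 1, hP2 0 {1,2} (by decide), hP2 1 {0,2} (by decide), hP2 2 {0,1} (by decide)] at h01 h02 h12 h012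
  simp only [h0, h1, h2] at h01 h02 h12 h012
  have hr := hρ0 x hx
  have hS : S = ∅ ∨ S = {0} ∨ S = {1} ∨ S = {2} ∨ S = {0,1} ∨ S = {0,2} ∨
      S = {1,2} ∨ S = {0,1,2} :=
    (by decide : ∀ T : Finset (Fin 3), T = ∅ ∨ T = {0} ∨ T = {1} ∨ T = {2} ∨ T = {0,1} ∨
      T = {0,2} ∨ T = {1,2} ∨ T = {0,1,2}) S
  have hq0 : fderiv ℝ (fun y => ρ y ∅ / ρ y ∅) x = 0 := by
    rw [hcong _ (fun _ => (1 : ℂ)) (fun y hy => div_self (hρ0 y hy))]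
    exact fderiv_const_apply 1
  have hq1 : ∀ j : Fin 3, fderiv ℝ (fun y => ρ y {j} / ρ y ∅) x =
      fderiv ℝ (fun y => lam y {j}) x := fun j =>
    hcong _ _ fun y hy => by
      rw [hpure1 y hy {j} (Finset.card_singleton j), mul_div_cancel_left₀ _ (hρ0 y hy)]
  have hq2 : ∀ T : Finset (Fin 3), T.card = 2 → fderiv ℝ (fun y => ρ y T / ρ y ∅) x =
      fderiv ℝ (fun y => mu y T) x := fun T hT =>
    hcong _ _ fun y hy => by
      rw [hpure2 y hy T hT, mul_div_cancel_left₀ _ (hρ0 y hy)]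
  rcases hS with hS | hS | hS | hS | hS | hS | hS | hS <;> subst hS
  · simp [extDer]
  · simp [extDer, fact0, fact1, fact2, fact3, fact4, fact5, fact6, fact7, fact8, fact9, fact10, fact11, fact12, fact13, fact14, fact15, fact16, fact17, fact18, fact19, fact20, fact21, fact22, fact23, fact24, fact25, fact26, fact27, fact28, fact29, fact30, fact31, fact32, fact33, fact34, fact35, fact36, fact37, fact38, fact39, fact40, fact41, fact42, fact43, fact44, fact45, fact46, fact47, fact48, fact49, fact50, fact51, fact52, fact53, fact54, fact55, fact56, fact57, fact58, fact59, fact60, fact61, fact62, fact63, fact64, fact65, fact66, fact67, fact68, fact69, fact70, fact71, fact72, fact73, fact74, fact75, fact76, fact77, fact78, fact79, fact80, fact81, fact82, fact83, fact84, fact85, fact86, fact87, fact88, fact89, fact90, fact91, fact92, fact93, fact94, fact95, fact96, fact97, fact98, fact99, fact100, fact101, fact102, fact103, fact104, fact105, fact106, fact107, fact108, fact109, fact110, fact111, fact112, fact113, fact114, fact115, fact116, fact117, fact118, fact119, fact120, fact121, fact122, fact123, fact124, fact125, hq0]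
  · simp [extDer, fact0, fact1, fact2, fact3, fact4, fact5, fact6, fact7, fact8, fact9, fact10, fact11, fact12, fact13, fact14, fact15, fact16, fact17, fact18, fact19, fact20, fact21, fact22, fact23, fact24, fact25, fact26, fact27, fact28, fact29, fact30, fact31, fact32, fact33, fact34, fact35, fact36, fact37, fact38, fact39, fact40, fact41, fact42, fact43, fact44, fact45, fact46, fact47, fact48, fact49, fact50, fact51, fact52, fact53, fact54, fact55, fact56, fact57, fact58, fact59, fact60, fact61, fact62, fact63, fact64, fact65, fact66, fact67, fact68, fact69, fact70, fact71, fact72, fact73, fact74, fact75, fact76, fact77, fact78, fact79, fact80, fact81, fact82, fact83, fact84, fact85, fact86, fact87, fact88, fact89, fact90, fact91, fact92, fact93, fact94, fact95, fact96, fact97, fact98, fact99, fact100, fact101, fact102, fact103, fact104, fact105, fact106, fact107, fact108, fact109, fact110, fact111, fact112, fact113, fact114, fact115, fact116, fact117, fact118, fact119, fact120, fact121, fact122, fact123, fact124, fact125, hq0]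
  · simp [extDer, fact0, fact1, fact2, fact3, fact4, fact5, fact6, fact7, fact8, fact9, fact10, fact11, fact12, fact13, fact14, fact15, fact16, fact17, fact18, fact19, fact20, fact21, fact22, fact23, fact24, fact25, fact26, fact27, fact28, fact29, fact30, fact31, fact32, fact33, fact34, fact35, fact36, fact37, fact38, fact39, fact40, fact41, fact42, fact43, fact44, fact45, fact46, fact47, fact48, fact49, fact50, fact51, fact52, fact53, fact54, fact55, fact56, fact57, fact58, fact59, fact60, fact61, fact62, fact63, fact64, fact65, fact66, fact67, fact68, fact69, fact70, fact71, fact72, fact73, fact74, fact75, fact76, fact77, fact78, fact79, fact80, fact81, fact82, fact83, fact84, fact85, fact86, fact87, fact88, fact89, fact90, fact91, fact92, fact93, fact94, fact95, fact96, fact97, fact98, fact99, fact100, fact101, fact102, fact103, fact104, fact105, fact106, fact107, fact108, fact109, fact110, fact111, fact112, fact113, fact114, fact115, fact116, fact117, fact118, fact119, fact120, fact121, fact122, fact123, fact124, fact125, hq0]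
  · have key : ρ x ∅ * (ρ x ∅ * ((fderiv ℝ (fun y => lam y {1}) x) (Pi.single 0 1)
        - (fderiv ℝ (fun y => lam y {0}) x) (Pi.single 1 1))) = 0 := by
      linear_combination (ρ x ∅) * h01 - (ρ x ∅ * mu x {0,1}) * hE
    have k2 := (mul_eq_zero.mp key).resolve_left hr
    have k3 := (mul_eq_zero.mp k2).resolve_left hr
    simp only [extDer]
    simp (config := { decide := true }) [fact0, fact1, fact2, fact3, fact4, fact5, fact6, fact7, fact8, fact9, fact10, fact11, fact12, fact13, fact14, fact15, fact16, fact17, fact18, fact19, fact20, fact21, fact22, fact23, fact24, fact25, fact26, fact27, fact28, fact29, fact30, fact31, fact32, fact33, fact34, fact35, fact36, fact37, fact38, fact39, fact40, fact41, fact42, fact43, fact44, fact45, fact46, fact47, fact48, fact49, fact50, fact51, fact52, fact53, fact54, fact55, fact56, fact57, fact58, fact59, fact60, fact61, fact62, fact63, fact64, fact65, fact66, fact67, fact68, fact69, fact70, fact71, fact72, fact73, fact74, fact75, fact76, fact77, fact78, fact79, fact80, fact81, fact82, fact83, fact84, fact85, fact86, fact87, fact88, fact89, fact90, fact91, fact92,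 fact93, fact94, fact95, fact96, fact97, fact98, fact99, fact100, fact101, fact102, fact103, fact104, fact105, fact106, fact107, fact108, fact109, fact110, fact111, fact112, fact113, fact114, fact115, fact116, fact117, fact118, fact119, fact120, fact121, fact122, fact123, fact124, fact125, Finset.sum_insert, Finset.sum_singleton, Finset.sum_empty, Fin.sum_univ_three, Finset.mem_insert, Finset.mem_singleton, hlam1 x, hmu2 x, hα1 x, pow_succ, pow_zero]
    rw [hq1 0, hq1 1]
    linear_combination k3
  · have key : ρ x ∅ * (ρ x ∅ * ((fderiv ℝ (fun y => lam y {2}) x) (Pi.single 0 1)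
        - (fderiv ℝ (fun y => lam y {0}) x) (Pi.single 2 1))) = 0 := by
      linear_combination (ρ x ∅) * h02 - (ρ x ∅ * mu x {0,2}) * hE
    have k2 := (mul_eq_zero.mp key).resolve_left hr
    have k3 := (mul_eq_zero.mp k2).resolve_left hr
    simp only [extDer]
    simp (config := { decide := true }) [fact0, fact1, fact2, fact3, fact4, fact5, fact6, fact7, fact8, fact9, fact10, fact11, fact12, fact13, fact14, fact15, fact16, fact17, fact18, fact19, fact20, fact21, fact22, fact23, fact24, fact25, fact26, fact27, fact28, fact29, fact30, fact31, fact32, fact33, fact34, fact35, fact36, fact37, fact38, fact39, fact40, fact41, fact42, fact43, fact44, fact45, fact46, fact47, fact48, fact49, fact50, fact51, fact52, fact53, fact54, fact55, fact56, fact57, fact58, fact59, fact60, fact61, fact62, fact63, fact64, fact65, fact66, fact67, fact68, fact69, fact70, fact71, fact72, fact73, fact74, fact75, fact76, fact77, fact78, fact79, fact80, fact81, fact82, fact83, fact84, fact85, fact86, fact87, fact88, fact89, fact90, fact91, fact92, fact93, fact94, fact95, fact96, fact97, fact98, fact99, fact100, fact101, fact102, fact103, fact104, fact105, fact106, fact107,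 fact108, fact109, fact110, fact111, fact112, fact113, fact114, fact115, fact116, fact117, fact118, fact119, fact120, fact121, fact122, fact123, fact124, fact125, Finset.sum_insert, Finset.sum_singleton, Finset.sum_empty, Fin.sum_univ_three, Finset.mem_insert, Finset.mem_singleton, hlam1 x, hmu2 x, hα1 x, pow_succ, pow_zero]
    rw [hq1 0, hq1 2]
    linear_combination k3
  · have key : ρ x ∅ * (ρ x ∅ * ((fderiv ℝ (fun y => lam y {2}) x) (Pi.single 1 1)
        - (fderiv ℝ (fun y => lam y {1}) x) (Pi.single 2 1))) = 0 := by
      linear_combination (ρ x ∅) * h12 - (ρ x ∅ * mu x {1,2}) * hE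
    have k2 := (mul_eq_zero.mp key).resolve_left hr
    have k3 := (mul_eq_zero.mp k2).resolve_left hr
    simp only [extDer]
    simp (config := { decide := true }) [fact0, fact1, fact2, fact3, fact4, fact5, fact6, fact7, fact8, fact9, fact10, fact11, fact12, fact13, fact14, fact15, fact16, fact17, fact18, fact19, fact20, fact21, fact22, fact23, fact24, fact25, fact26, fact27, fact28, fact29, fact30, fact31, fact32, fact33, fact34, fact35, fact36, fact37, fact38, fact39, fact40, fact41, fact42, fact43, fact44, fact45, fact46, fact47, fact48, fact49, fact50, fact51, fact52, fact53, fact54, fact55, fact56, fact57, fact58, fact59, fact60, fact61, fact62, fact63, fact64, fact65, fact66, fact67, fact68, fact69, fact70, fact71, fact72, fact73, fact74, fact75, fact76, fact77, fact78, fact79, fact80, fact81, fact82, fact83, fact84, fact85, fact86, fact87, fact88, fact89, fact90, fact91, fact92, fact93, fact94, fact95, fact96, fact97, fact98, fact99, fact100, fact101, fact102, fact103, fact104, fact105, fact106, fact107, fact108, fact109, fact110, fact111, fact112, fact113, fact114, fact115, fact116, fact117, fact118, fact119, fact120, fact121, fact122, fact123, fact124, fact125, Finset.sum_insert, Finset.sum_singleton,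 Finset.sum_empty, Fin.sum_univ_three, Finset.mem_insert, Finset.mem_singleton, hlam1 x, hmu2 x, hα1 x, pow_succ, pow_zero]
    rw [hq1 1, hq1 2]
    linear_combination k3
  · have key : ρ x ∅ * ((fderiv ℝ (fun y => mu y {1,2}) x) (Pi.single 0 1)
        - (fderiv ℝ (fun y => mu y {0,2}) x) (Pi.single 1 1)
        + (fderiv ℝ (fun y => mu y {0,1}) x) (Pi.single 2 1)) = 0 := by
      linear_combination h012
    have k2 := (mul_eq_zero.mp key).resolve_left hr
    simp only [extDer]
    simp (config := { decide := true }) [fact0, fact1, fact2, fact3, fact4, fact5, fact6, fact7, fact8, fact9, fact10, fact11, fact12, fact13, fact14, fact15, fact16, fact17, fact18, fact19, fact20, fact21, fact22, fact23, fact24, fact25, fact26, fact27, fact28, fact29, fact30, fact31, fact32, fact33, fact34, fact35, fact36, fact37, fact38, fact39, fact40, fact41, fact42, fact43, fact44, fact45, fact46, fact47, fact48, fact49, fact50, fact51, fact52, fact53, fact54, fact55, fact56, fact57, fact58, fact59, fact60, fact61, fact62, fact63, fact64, fact65, fact66, fact67, fact68, fact69, fact70, fact71, fact72, fact73, fact74,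 fact75, fact76, fact77, fact78, fact79, fact80, fact81, fact82, fact83, fact84, fact85, fact86, fact87, fact88, fact89, fact90, fact91, fact92, fact93, fact94, fact95, fact96, fact97, fact98, fact99, fact100, fact101, fact102, fact103, fact104, fact105, fact106, fact107, fact108, fact109, fact110, fact111, fact112, fact113, fact114, fact115, fact116, fact117, fact118, fact119, fact120, fact121, fact122, fact123, fact124, fact125, Finset.sum_insert, Finset.sum_singleton, Finset.sum_empty, Fin.sum_univ_three, Finset.mem_insert, Finset.mem_singleton, hlam1 x, hmu2 x, hα1 x, pow_succ, pow_zero]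
    rw [hq2 {1,2} (by decide), hq2 {0,2} (by decide), hq2 {0,1} (by decide)]
    linear_combination k2
end
end
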